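/- arXiv:1211.2365 — 4 statements merged into one kernel-verified Lean document; each statement's English description precedes it below -/
import Mathlib

section
/- Let γ : [0, L] → ℝ² be a continuously differentiable unit-speed curve whose derivative γ' is 1-Lipschitz as a map into the unit circle (i.e., for all t < s the angle between γ'(s) and γ'(t) is at most s − t). Then for any t and s with t < s < t + π, the chord length satisfies |γ(s) − γ(t)| ≥ 2·sin((s − t)/2). -/
/-!
Fix `t` and compare `γ` with the unit circle. For `t ≤ u`, the function
`τ ↦ ⟪γ' u, γ τ⟫ + sin (u - τ)` is nondecreasing on `[t, u]`, since its derivative is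
`⟪γ' u, γ' τ⟫ - cos (u - τ) ≥ 0`; hence `⟪γ' u, γ u - γ t⟫ ≥ sin (u - t)`. This says that
`u ↦ ‖γ u - γ t‖² - 2 (1 - cos (u - t))` is nondecreasing on `[t, s]`, and it vanishes at `u = t`,
so `‖γ s - γ t‖² ≥ 2 (1 - cos (s - t)) = (2 sin ((s - t) / 2))²`.
-/

open Real Set

theorem sub_le_sub_of_hasDerivAt_le {f g f' g' : ℝ → ℝ} {a b : ℝ} (hab : a ≤ b)
    (hf : ∀ x ∈ Icc a b, HasDerivAt f (f' x) x) (hg : ∀ x ∈ Icc a b, HasDerivAt g (g' x) x)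
    (hle : ∀ x ∈ Ioo a b, f' x ≤ g' x) : f b - f a ≤ g b - g a := by
  have hd : ∀ x ∈ Icc a b, HasDerivAt (g - f) (g' x - f' x) x :=
    fun x hx => (hg x hx).sub (hf x hx)
  have hmono : MonotoneOn (g - f) (Icc a b) := by
    refine monotoneOn_of_hasDerivWithinAt_nonneg (f' := g' - f') (convex_Icc a b)
      (fun x hx => (hd x hx).continuousAt.continuousWithinAt) (fun x hx => ?_) (fun x hx => ?_)
    · exact (hd x (interior_subset hx)).hasDerivWithinAt
    · rw [interior_Icc] at hx
      exact sub_nonneg.mpr (hle x hx)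
  have := hmono (left_mem_Icc.mpr hab) (right_mem_Icc.mpr hab) hab
  simp only [Pi.sub_apply] at this
  linarith

variable {E : Type*} [NormedAddCommGroup E] [InnerProductSpace ℝ E]

theorem sin_le_inner_deriv_sub {γ γ' : ℝ → E} {t u : ℝ} (htu : t ≤ u)
    (hγ : ∀ τ ∈ Icc t u, HasDerivAt γ (γ' τ) τ)
    (hcos : ∀ τ ∈ Ioo t u, cos (u - τ) ≤ inner ℝ (γ' u) (γ' τ)) :
    sin (u - t) ≤ inner ℝ (γ' u) (γ u - γ t) := by
  have hsin : ∀ τ : ℝ, HasDerivAt (fun τ => -sin (u - τ)) (cos (u - τ)) τ := fun τ => by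
    simpa using ((hasDerivAt_id τ).const_sub u).sin.fun_neg
  have hproj : ∀ τ ∈ Icc t u, HasDerivAt (fun τ => inner ℝ (γ' u) (γ τ)) (inner ℝ (γ' u) (γ' τ)) τ :=
    fun τ hτ => by simpa using (hasDerivAt_const τ (γ' u)).inner ℝ (hγ τ hτ)
  have := sub_le_sub_of_hasDerivAt_le htu (fun τ _ => hsin τ) hproj hcos
  simpa [inner_sub_right] using this

theorem two_mul_one_sub_cos_le_norm_sub_sq {γ γ' : ℝ → E} {t s : ℝ} (hts : t ≤ s)
    (hγ : ∀ τ ∈ Icc t s, HasDerivAt γ (γ' τ) τ)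
    (hcos : ∀ τ u, t < τ → τ < u → u < s → cos (u - τ) ≤ inner ℝ (γ' u) (γ' τ)) :
    2 * (1 - cos (s - t)) ≤ ‖γ s - γ t‖ ^ 2 := by
  have hcircle : ∀ u : ℝ, HasDerivAt (fun u => 2 * (1 - cos (u - t))) (2 * sin (u - t)) u :=
    fun u => by simpa using (((hasDerivAt_id u).sub_const t).cos.const_sub 1).const_mul 2
  have hchord : ∀ u ∈ Icc t s,
      HasDerivAt (fun u => ‖γ u - γ t‖ ^ 2) (2 * inner ℝ (γ u - γ t) (γ' u)) u :=
    fun u hu => ((hγ u hu).sub_const (γ t)).norm_sq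
  have hsin : ∀ u ∈ Ioo t s, sin (u - t) ≤ inner ℝ (γ u - γ t) (γ' u) := fun u hu => by
    rw [real_inner_comm]
    exact sin_le_inner_deriv_sub hu.1.le
      (fun τ hτ => hγ τ ⟨hτ.1, hτ.2.trans hu.2.le⟩)
      (fun τ hτ => hcos τ u hτ.1 hτ.2 hu.2)
  have := sub_le_sub_of_hasDerivAt_le hts (fun u _ => hcircle u) hchord
    (fun u hu => by linarith [hsin u hu])
  simpa using this

theorem two_mul_sin_half_le_of_two_mul_one_sub_cos_le_sq {x r : ℝ} (hr : 0 ≤ r)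
    (h : 2 * (1 - cos x) ≤ r ^ 2) : 2 * sin (x / 2) ≤ r := by
  have hhalf : (2 * sin (x / 2)) ^ 2 = 2 * (1 - cos x) := by
    have := cos_two_mul (x / 2)
    rw [mul_div_cancel₀ x two_ne_zero] at this
    nlinarith [sin_sq_add_cos_sq (x / 2)]
  exact (le_abs_self _).trans (abs_le_of_sq_le_sq (hhalf ▸ h) hr)

theorem chord_length_lower_bound_general
    (L : ℝ) (γ γ' : ℝ → EuclideanSpace ℝ (Fin 2))
    (hderiv : ∀ t ∈ Set.Icc (0:ℝ) L, HasDerivAt γ (γ' t) t)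
    (hlip : ∀ t s : ℝ, t ∈ Set.Icc (0:ℝ) L → s ∈ Set.Icc (0:ℝ) L → t ≤ s → s - t ≤ π →
      Real.cos (s - t) ≤ (inner ℝ (γ' s) (γ' t) : ℝ))
    (t s : ℝ) (ht : 0 ≤ t) (hts : t < s) (hsL : s ≤ L) (hspi : s < t + π) :
    2 * Real.sin ((s - t) / 2) ≤ ‖γ s - γ t‖ := by
  have hγ : ∀ τ ∈ Icc t s, HasDerivAt γ (γ' τ) τ :=
    fun τ hτ => hderiv τ ⟨ht.trans hτ.1, hτ.2.trans hsL⟩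
  have hcos : ∀ τ u, t < τ → τ < u → u < s → cos (u - τ) ≤ inner ℝ (γ' u) (γ' τ) :=
    fun τ u htτ hτu hus => hlip τ u ⟨by linarith, by linarith⟩ ⟨by linarith, by linarith⟩
      hτu.le (by linarith)
  exact two_mul_sin_half_le_of_two_mul_one_sub_cos_le_sq (norm_nonneg _)
    (two_mul_one_sub_cos_le_norm_sub_sq hts.le hγ hcos)

/-- Chord-length lower bound for a unit-speed curve with 1-Lipschitz unit tangent:
`‖γ s - γ t‖ ≥ 2 sin ((s - t)/2)` for `t < s < t + π`. -/
theorem chord_length_lower_bound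
    (L : ℝ) (γ γ' : ℝ → EuclideanSpace ℝ (Fin 2))
    (hderiv : ∀ t ∈ Set.Icc (0:ℝ) L, HasDerivAt γ (γ' t) t)
    (hunit : ∀ t ∈ Set.Icc (0:ℝ) L, ‖γ' t‖ = 1)
    (hlip : ∀ t s : ℝ, t ∈ Set.Icc (0:ℝ) L → s ∈ Set.Icc (0:ℝ) L → t ≤ s → s - t ≤ π →
      Real.cos (s - t) ≤ (inner ℝ (γ' s) (γ' t) : ℝ))
    (t s : ℝ) (ht : 0 ≤ t) (hts : t < s) (hsL : s ≤ L) (hspi : s < t + π) :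
    2 * Real.sin ((s - t) / 2) ≤ ‖γ s - γ t‖ :=
  chord_length_lower_bound_general L γ γ' hderiv hlip t s ht hts hsL hspi
end

section
/- Let γ : [0, L] → ℝ² be a unit-speed curve with γ(0) = 0, γ'(0) = (1,0), and whose unit tangent γ' is 1-Lipschitz into the unit circle. Then for 0 < s < π, the angle between γ'(0) and the ray from γ(0) to γ(s) is at most s/2; equivalently, writing γ(s) = (x(s), y(s)), one has y(s)/x(s) ≤ tan(s/2). -/
open Real

/-! With `n = (sin (s/2), -cos (s/2))` the claim says `⟪γ s, n⟫ ≥ 0`. Pair the parameters `τ` and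
`s - τ`: writing `γ' τ = (cos α, sin α)` and `γ' (s - τ) = (cos β, sin β)`, the curvature bound
forces `|α| ≤ τ`, `|β| ≤ s - τ` and `|α - β| ≤ |s - 2τ|`, so that
`⟪γ' τ + γ' (s - τ), n⟫ = sin (s/2 - α) + sin (s/2 - β) = 2 sin (s/2 - (α + β)/2) cos ((β - α)/2)`
is nonnegative. Hence `τ ↦ ⟪γ τ - γ (s - τ), n⟫` is monotone on `[0, s]`, and comparing its values
at `0` and `s` gives `⟪γ s, n⟫ ≥ 0`. The denominator is positive because `x' ≥ cos` yields
`x s ≥ sin s`. -/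

lemma exists_abs_le_pi_eq_cos_sin {p : ℝ × ℝ} (hp : p.1 ^ 2 + p.2 ^ 2 = 1) :
    ∃ α : ℝ, |α| ≤ π ∧ p = (cos α, sin α) := by
  set z : ℂ := ⟨p.1, p.2⟩
  have hz : ‖z‖ = 1 := by
    rw [Complex.norm_def, Complex.normSq_mk, ← sq, ← sq, hp, sqrt_one]
  have hz0 : z ≠ 0 := norm_ne_zero_iff.mp (hz ▸ one_ne_zero)
  refine ⟨z.arg, Complex.abs_arg_le_pi z, Prod.ext ?_ ?_⟩
  · rw [Complex.cos_arg hz0, hz, div_one]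
  · rw [Complex.sin_arg, hz, div_one]

lemma abs_le_of_cos_le_cos {θ δ : ℝ} (hθ : |θ| ≤ π) (hδ₀ : 0 ≤ δ) (hδ : δ ≤ π)
    (h : cos δ ≤ cos θ) : |θ| ≤ δ := by
  rwa [← cos_abs θ, strictAntiOn_cos.le_iff_ge ⟨hδ₀, hδ⟩ ⟨abs_nonneg θ, hθ⟩] at h

lemma sin_add_sin_nonneg {x y : ℝ} (h₀ : 0 ≤ x + y) (h₂π : x + y ≤ 2 * π) (hxy : |x - y| ≤ π) :
    0 ≤ sin x + sin y := by
  rw [sin_add_sin]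
  have hcos : 0 ≤ cos ((x - y) / 2) := by
    apply cos_nonneg_of_mem_Icc
    constructor <;> linarith [abs_le.mp hxy]
  have hsin : 0 ≤ sin ((x + y) / 2) := sin_nonneg_of_nonneg_of_le_pi (by linarith) (by linarith)
  positivity

lemma sin_mul_add_sub_cos_mul_add_nonneg {t u : ℝ} {p q : ℝ × ℝ} (ht : 0 ≤ t) (hu : 0 ≤ u)
    (htu : t + u ≤ π) (hp : p.1 ^ 2 + p.2 ^ 2 = 1) (hq : q.1 ^ 2 + q.2 ^ 2 = 1)
    (hpt : cos t ≤ p.1) (hqu : cos u ≤ q.1) (hpq : cos (t - u) ≤ p.1 * q.1 + p.2 * q.2) :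
    0 ≤ sin ((t + u) / 2) * (p.1 + q.1) - cos ((t + u) / 2) * (p.2 + q.2) := by
  obtain ⟨α, hα, rfl⟩ := exists_abs_le_pi_eq_cos_sin hp
  obtain ⟨β, hβ, rfl⟩ := exists_abs_le_pi_eq_cos_sin hq
  dsimp only at hpt hqu hpq ⊢
  have hαt := abs_le.mp (abs_le_of_cos_le_cos hα ht (by linarith) hpt)
  have hβu := abs_le.mp (abs_le_of_cos_le_cos hβ hu (by linarith) hqu)
  have htu' : |t - u| ≤ π := abs_le.mpr ⟨by linarith, by linarith⟩
  have hαβ : |α - β| ≤ |t - u| := abs_le_of_cos_le_cos (abs_le.mpr ⟨by linarith, by linarith⟩)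
    (abs_nonneg _) htu' (by rwa [cos_abs, cos_sub α β])
  have hsum : α + β ≤ t + u := by
    rcases le_total t u with h | h
    · rw [abs_of_nonpos (sub_nonpos.mpr h)] at hαβ
      linarith [(abs_le.mp hαβ).1]
    · rw [abs_of_nonneg (sub_nonneg.mpr h)] at hαβ
      linarith [(abs_le.mp hαβ).2]
  have := sin_add_sin_nonneg (x := (t + u) / 2 - α) (y := (t + u) / 2 - β) (by linarith)
    (by linarith) (by rw [sub_sub_sub_cancel_left, abs_sub_comm]; exact hαβ.trans htu')
  rw [sin_sub, sin_sub] at this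
  linarith

section Prod

variable {𝕜 E F : Type*} [NontriviallyNormedField 𝕜] [NormedAddCommGroup E] [NormedSpace 𝕜 E]
  [NormedAddCommGroup F] [NormedSpace 𝕜 F] {f : 𝕜 → E × F} {f' : E × F} {x : 𝕜}

theorem HasDerivAt.fst (h : HasDerivAt f f' x) : HasDerivAt (fun t => (f t).1) f'.1 x :=
  HasFDerivAt.fst h

theorem HasDerivAt.snd (h : HasDerivAt f f' x) : HasDerivAt (fun t => (f t).2) f'.2 x :=
  HasFDerivAt.snd h

end Prod

lemma le_of_hasDerivAt_nonneg {f f' : ℝ → ℝ} {a b : ℝ} (hab : a ≤ b)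
    (hf : ∀ x ∈ Set.Icc a b, HasDerivAt f (f' x) x) (hf' : ∀ x ∈ Set.Ioo a b, 0 ≤ f' x) :
    f a ≤ f b :=
  monotoneOn_of_hasDerivWithinAt_nonneg (convex_Icc a b)
    (fun x hx => (hf x hx).continuousAt.continuousWithinAt)
    (fun x hx => (hf x (interior_subset hx)).hasDerivWithinAt)
    (fun x hx => hf' x (by rwa [interior_Icc] at hx)) ⟨le_rfl, hab⟩ ⟨hab, le_rfl⟩ hab

lemma sin_le_fst_of_cos_le_fst_deriv {γ γ' : ℝ → ℝ × ℝ} {s : ℝ} (hs : 0 ≤ s)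
    (hderiv : ∀ t ∈ Set.Icc 0 s, HasDerivAt γ (γ' t) t) (hγ0 : (γ 0).1 = 0)
    (hx' : ∀ t ∈ Set.Icc 0 s, cos t ≤ (γ' t).1) :
    sin s ≤ (γ s).1 := by
  have := le_of_hasDerivAt_nonneg hs (f := fun t => (γ t).1 - sin t)
    (fun t ht => (hderiv t ht).fst.sub (hasDerivAt_sin t))
    (fun t ht => sub_nonneg.mpr (hx' t (Set.Ioo_subset_Icc_self ht)))
  simpa [hγ0] using this

lemma sin_half_mul_fst_sub_cos_half_mul_snd_nonneg {γ γ' : ℝ → ℝ × ℝ} {s : ℝ} (hs : 0 ≤ s)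
    (hsπ : s ≤ π) (hderiv : ∀ t ∈ Set.Icc 0 s, HasDerivAt γ (γ' t) t)
    (hunit : ∀ t ∈ Set.Icc 0 s, (γ' t).1 ^ 2 + (γ' t).2 ^ 2 = 1)
    (hx' : ∀ t ∈ Set.Icc 0 s, cos t ≤ (γ' t).1)
    (hcos : ∀ t ∈ Set.Icc 0 s, ∀ u ∈ Set.Icc 0 s,
      cos (t - u) ≤ (γ' t).1 * (γ' u).1 + (γ' t).2 * (γ' u).2)
    (hγ0 : γ 0 = (0, 0)) :
    0 ≤ sin (s / 2) * (γ s).1 - cos (s / 2) * (γ s).2 := by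
  set φ : ℝ × ℝ → ℝ := fun p => sin (s / 2) * p.1 - cos (s / 2) * p.2
  have hφ : ∀ t ∈ Set.Icc 0 s, HasDerivAt (fun t => φ (γ t)) (φ (γ' t)) t := fun t ht =>
    ((hderiv t ht).fst.const_mul _).sub ((hderiv t ht).snd.const_mul _)
  have hrefl : ∀ t ∈ Set.Icc 0 s, s - t ∈ Set.Icc 0 s := fun t ht =>
    ⟨by linarith [ht.2], by linarith [ht.1]⟩
  have hpair : ∀ t ∈ Set.Icc 0 s, 0 ≤ φ (γ' t) + φ (γ' (s - t)) := fun t ht => by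
    have := sin_mul_add_sub_cos_mul_add_nonneg ht.1 (hrefl t ht).1 (by linarith)
      (hunit t ht) (hunit (s - t) (hrefl t ht)) (hx' t ht) (hx' (s - t) (hrefl t ht))
      (hcos t ht (s - t) (hrefl t ht))
    rw [add_sub_cancel] at this
    simp only [φ]
    linarith
  have := le_of_hasDerivAt_nonneg hs (f := fun t => φ (γ t) - φ (γ (s - t)))
    (fun t ht => (hφ t ht).sub ((hφ (s - t) (hrefl t ht)).comp_const_sub s t))
    (fun t ht => by simpa only [sub_neg_eq_add] using hpair t (Set.Ioo_subset_Icc_self ht))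
  simp only [sub_zero, sub_self, hγ0, φ] at this
  linarith

/-- The angle between the initial tangent `γ'(0) = (1,0)` and the ray from `γ(0) = 0`
to `γ(s)` is at most `s/2`; equivalently the slope `y(s)/x(s)` is at most `tan (s/2)`. -/
theorem slope_bound
    (L : ℝ) (γ γ' : ℝ → ℝ × ℝ)
    (hderiv : ∀ t ∈ Set.Icc (0:ℝ) L, HasDerivAt γ (γ' t) t)
    (hunit : ∀ t ∈ Set.Icc (0:ℝ) L, (γ' t).1 ^ 2 + (γ' t).2 ^ 2 = 1)
    (hlip : ∀ t s : ℝ, t ∈ Set.Icc (0:ℝ) L → s ∈ Set.Icc (0:ℝ) L → t ≤ s → s - t ≤ π →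
      Real.cos (s - t) ≤ (γ' s).1 * (γ' t).1 + (γ' s).2 * (γ' t).2)
    (hγ0 : γ 0 = (0, 0)) (hγ'0 : γ' 0 = (1, 0))
    (s : ℝ) (hs0 : 0 < s) (hsπ : s < π) (hsL : s ≤ L) :
    (γ s).2 / (γ s).1 ≤ Real.tan (s / 2) := by
  have hsub : Set.Icc 0 s ⊆ Set.Icc 0 L := Set.Icc_subset_Icc le_rfl hsL
  have hcos : ∀ t ∈ Set.Icc 0 s, ∀ u ∈ Set.Icc 0 s,
      cos (t - u) ≤ (γ' t).1 * (γ' u).1 + (γ' t).2 * (γ' u).2 := by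
    intro t ht u hu
    rcases le_total u t with h | h
    · exact hlip u t (hsub hu) (hsub ht) h (by linarith [hu.1, ht.2])
    · rw [← cos_neg, neg_sub]
      linarith [hlip t u (hsub ht) (hsub hu) h (by linarith [ht.1, hu.2])]
  have hx' : ∀ t ∈ Set.Icc 0 s, cos t ≤ (γ' t).1 := fun t ht => by
    simpa [hγ'0] using hcos t ht 0 ⟨le_rfl, hs0.le⟩
  have hx : sin s ≤ (γ s).1 :=
    sin_le_fst_of_cos_le_fst_deriv hs0.le (fun t ht => hderiv t (hsub ht)) (by simp [hγ0]) hx'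
  have hn := sin_half_mul_fst_sub_cos_half_mul_snd_nonneg hs0.le hsπ.le
    (fun t ht => hderiv t (hsub ht)) (fun t ht => hunit t (hsub ht)) hx' hcos hγ0
  have hcos_half : 0 < cos (s / 2) := cos_pos_of_mem_Ioo ⟨by linarith, by linarith⟩
  rw [tan_eq_sin_div_cos, div_le_div_iff₀ ((sin_pos_of_pos_of_lt_pi hs0 hsπ).trans_le hx)
    hcos_half]
  linarith
end

section
/- Let γ : [0, L] → ℝ² be a unit-speed curve with 1-Lipschitz unit tangent, let θ ∈ (0, L) and write L = mθ + δ with m = ⌊L/θ⌋ and 0 ≤ δ < θ. Define the θ-discretization P of γ with vertices γ(tᵢ) where t₀ = 0, tₖ = L, consecutive parameter gaps equal θ except possibly the first and last gap which equal δ/2 (when δ > 0). Then every edge of P corresponding to a parameter gap of θ has length at least ℓ = 2·sin(θ/2), and consequently no two consecutive edges of P both have length < ℓ. -/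
/-!
Let `m` be the midpoint of `[a, b]` with `b - a ≤ π`. The tangent bound
`cos (u - m) ≤ ⟪γ' u, γ' m⟫` makes `u ↦ ⟪γ u, γ' m⟫ - sin (u - m)` nondecreasing on `[a, b]`,
so `|γ b - γ a| ≥ ⟪γ b - γ a, γ' m⟫ ≥ 2 sin ((b - a) / 2)`: every edge over a full gap `θ` has
length at least `ℓ = 2 sin (θ / 2)`. Two consecutive short edges would therefore both be
half-remainder edges at the two ends of the path, forcing `k = 2` and `L = δ < θ < L`.
-/

open Real Set

section Chord

variable {E : Type*} [NormedAddCommGroup E] [InnerProductSpace ℝ E]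

theorem two_mul_sin_half_le_inner_sub {γ γ' : ℝ → E} {v : E} {a b : ℝ} (hab : a ≤ b)
    (hderiv : ∀ u ∈ Icc a b, HasDerivAt γ (γ' u) u)
    (hcos : ∀ u ∈ Icc a b, cos (u - (a + b) / 2) ≤ inner ℝ (γ' u) v) :
    2 * sin ((b - a) / 2) ≤ inner ℝ (γ b - γ a) v := by
  have hg_deriv : ∀ u ∈ Icc a b, HasDerivAt (fun u => inner ℝ (γ u) v - sin (u - (a + b) / 2))
      (inner ℝ (γ' u) v - cos (u - (a + b) / 2)) u := fun u hu => by
    have hinner : HasDerivAt (fun u => inner ℝ (γ u) v) (inner ℝ (γ' u) v) u := by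
      simpa using (hderiv u hu).inner ℝ (hasDerivAt_const u v)
    have hsin : HasDerivAt (fun u => sin (u - (a + b) / 2)) (cos (u - (a + b) / 2)) u := by
      simpa using ((hasDerivAt_id u).sub_const ((a + b) / 2)).sin
    exact hinner.sub hsin
  have hg_mono : MonotoneOn (fun u => inner ℝ (γ u) v - sin (u - (a + b) / 2)) (Icc a b) :=
    monotoneOn_of_hasDerivWithinAt_nonneg (convex_Icc a b)
      (fun u hu => (hg_deriv u hu).continuousAt.continuousWithinAt)
      (fun u hu => (hg_deriv u (interior_subset hu)).hasDerivWithinAt)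
      (fun u hu => sub_nonneg.2 (hcos u (interior_subset hu)))
  have hgab := hg_mono (left_mem_Icc.2 hab) (right_mem_Icc.2 hab) hab
  have hb : b - (a + b) / 2 = (b - a) / 2 := by ring
  have ha : a - (a + b) / 2 = -((b - a) / 2) := by ring
  simp only [hb, ha, sin_neg] at hgab
  rw [inner_sub_left]
  linarith

theorem two_mul_sin_half_le_dist {L : ℝ} {γ γ' : ℝ → E}
    (hderiv : ∀ t ∈ Icc (0:ℝ) L, HasDerivAt γ (γ' t) t)
    (hunit : ∀ t ∈ Icc (0:ℝ) L, ‖γ' t‖ = 1)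
    (hlip : ∀ t s : ℝ, t ∈ Icc (0:ℝ) L → s ∈ Icc (0:ℝ) L → t ≤ s → s - t ≤ π →
      cos (s - t) ≤ inner ℝ (γ' s) (γ' t))
    {a b : ℝ} (ha : a ∈ Icc (0:ℝ) L) (hb : b ∈ Icc (0:ℝ) L) (hab : a ≤ b) (hπ : b - a ≤ π) :
    2 * sin ((b - a) / 2) ≤ dist (γ a) (γ b) := by
  set m := (a + b) / 2 with hm_def
  have hsub : Icc a b ⊆ Icc (0:ℝ) L := Icc_subset_Icc ha.1 hb.2
  have hm : m ∈ Icc (0:ℝ) L := hsub ⟨by linarith, by linarith⟩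
  have hcos : ∀ u ∈ Icc a b, cos (u - m) ≤ inner ℝ (γ' u) (γ' m) := by
    rintro u ⟨hau, hub⟩
    rcases le_total u m with hum | hmu
    · rw [← cos_neg, neg_sub, real_inner_comm]
      exact hlip u m (hsub ⟨hau, hub⟩) hm hum (by linarith [hm_def])
    · exact hlip m u hm (hsub ⟨hau, hub⟩) hmu (by linarith [hm_def])
  calc 2 * sin ((b - a) / 2) ≤ inner ℝ (γ b - γ a) (γ' m) :=
        two_mul_sin_half_le_inner_sub hab (fun u hu => hderiv u (hsub hu)) hcos
    _ ≤ ‖γ b - γ a‖ * ‖γ' m‖ := real_inner_le_norm _ _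
    _ = dist (γ a) (γ b) := by rw [hunit m hm, mul_one, dist_comm, dist_eq_norm]

end Chord

/-- In the `θ`-discretization of a unit-speed curve with 1-Lipschitz unit tangent,
every edge corresponding to a parameter gap of `θ` has length at least `ℓ = 2 sin (θ/2)`,
and consequently no two consecutive edges are both shorter than `ℓ`. -/
theorem discretization_edge_lengths
    (L θ : ℝ) (γ γ' : ℝ → EuclideanSpace ℝ (Fin 2))
    (hderiv : ∀ t ∈ Set.Icc (0:ℝ) L, HasDerivAt γ (γ' t) t)
    (hunit : ∀ t ∈ Set.Icc (0:ℝ) L, ‖γ' t‖ = 1)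
    (hlip : ∀ t s : ℝ, t ∈ Set.Icc (0:ℝ) L → s ∈ Set.Icc (0:ℝ) L → t ≤ s → s - t ≤ π →
      Real.cos (s - t) ≤ (inner ℝ (γ' s) (γ' t) : ℝ))
    (hθ0 : 0 < θ) (hθL : θ < L) (hθπ : θ < π)
    (k : ℕ) (t : ℕ → ℝ)
    (ht0 : t 0 = 0) (htk : t k = L)
    (hrange : ∀ i ≤ k, t i ∈ Set.Icc (0:ℝ) L)
    (hgap : ∀ i < k, t (i+1) - t i = θ ∨
      ((i = 0 ∨ i = k - 1) ∧ t (i+1) - t i = (L - (⌊L / θ⌋ : ℝ) * θ) / 2)) :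
    (∀ i < k, t (i+1) - t i = θ →
      2 * Real.sin (θ / 2) ≤ dist (γ (t i)) (γ (t (i+1)))) ∧
    (∀ i : ℕ, i + 1 < k →
      ¬ (dist (γ (t i)) (γ (t (i+1))) < 2 * Real.sin (θ / 2) ∧
         dist (γ (t (i+1))) (γ (t (i+2))) < 2 * Real.sin (θ / 2))) := by
  have long_edge : ∀ i < k, t (i+1) - t i = θ →
      2 * sin (θ / 2) ≤ dist (γ (t i)) (γ (t (i+1))) := fun i hi hθgap => by
    simpa [hθgap] using two_mul_sin_half_le_dist hderiv hunit hlip (hrange i hi.le)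
      (hrange (i+1) hi) (by linarith) (by linarith)
  refine ⟨long_edge, ?_⟩
  rintro i hi ⟨hshort, hshort_succ⟩
  have end_edge : ∀ j < k, dist (γ (t j)) (γ (t (j+1))) < 2 * sin (θ / 2) →
      (j = 0 ∨ j = k - 1) ∧ t (j+1) - t j = (L - ⌊L / θ⌋ * θ) / 2 := fun j hj hj_short =>
    (hgap j hj).resolve_left fun hθgap => (long_edge j hj hθgap).not_gt hj_short
  obtain ⟨hi_end, hgap₀⟩ := end_edge i (by omega) hshort
  obtain ⟨hi_end', hgap₁⟩ := end_edge (i+1) hi hshort_succ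
  obtain ⟨rfl, rfl⟩ : i = 0 ∧ k = 2 := by omega
  have hδ := Int.sub_floor_div_mul_lt L hθ0
  simp only [zero_add, ht0] at hgap₀ hgap₁ htk
  linarith
end

section
/- Let γ : [0, L] → ℝ² be a unit-speed curve with 1-Lipschitz unit tangent, and let P be a θ-discretization of γ with vertices Pᵢ = γ(tᵢ), where consecutive parameter gaps are at most θ. Suppose tᵢ − tᵢ₋₁ = tᵢ₊₁ − tᵢ = θ < π. Then the turn of P at the vertex Pᵢ (the angle between the vectors Pᵢ − Pᵢ₋₁ and Pᵢ₊₁ − Pᵢ) is at most θ. -/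
open Real Set
set_option maxHeartbeats 1000000
open scoped RealInnerProductSpace

noncomputable def perpV (u : EuclideanSpace ℝ (Fin 2)) : EuclideanSpace ℝ (Fin 2) :=
  (WithLp.equiv 2 (Fin 2 → ℝ)).symm ![-(u 1), u 0]

lemma inner_two (x y : EuclideanSpace ℝ (Fin 2)) : ⟪x, y⟫ = x 0 * y 0 + x 1 * y 1 := by
  simp [PiLp.inner_apply, Fin.sum_univ_two, RCLike.inner_apply, mul_comm]

lemma pythag {u : EuclideanSpace ℝ (Fin 2)} (hu : ‖u‖ = 1) (v : EuclideanSpace ℝ (Fin 2)) :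
    ⟪v, u⟫ ^ 2 + ⟪v, perpV u⟫ ^ 2 = ‖v‖ ^ 2 := by
  have hn : ‖v‖ ^ 2 = v 0 * v 0 + v 1 * v 1 := by
    rw [← real_inner_self_eq_norm_sq, inner_two]
  have hu2 : u 0 * u 0 + u 1 * u 1 = 1 := by
    have := real_inner_self_eq_norm_sq u
    rw [inner_two, hu] at this; simpa using this
  have hp0 : perpV u 0 = -(u 1) := rfl
  have hp1 : perpV u 1 = u 0 := rfl
  rw [inner_two, inner_two, hp0, hp1, hn]
  linear_combination (v 0 * v 0 + v 1 * v 1) * hu2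

lemma pt_bound {θ m c b : ℝ} (hθ0 : 0 < θ) (hθπ : θ < π) (hm0 : 0 ≤ m) (hmθ : m ≤ θ)
    (hcb : c ^ 2 + b ^ 2 = 1) (hc : Real.cos m ≤ c) :
    b - Real.tan (θ / 2) * c ≤ Real.sin m - Real.tan (θ / 2) * Real.cos m := by
  have hmπ : m ≤ π := hmθ.trans hθπ.le
  have hc1 : c ≤ 1 := by nlinarith [sq_nonneg b]
  set t := Real.arccos c with ht
  have hct : Real.cos t = c := Real.cos_arccos (by nlinarith [Real.neg_one_le_cos m]) hc1
  have ht0 : 0 ≤ t := Real.arccos_nonneg c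
  have htm : t ≤ m := by
    rw [ht]
    calc Real.arccos c ≤ Real.arccos (Real.cos m) := by
          apply (Real.strictAntiOn_arccos.le_iff_ge ⟨by nlinarith [Real.neg_one_le_cos m], hc1⟩
            ⟨Real.neg_one_le_cos m, Real.cos_le_one m⟩).2 hc
      _ = m := Real.arccos_cos hm0 hmπ
  have hbs : b ≤ Real.sin t := by
    have hs : Real.sin t ^ 2 = b ^ 2 := by
      have := Real.sin_sq_add_cos_sq t
      rw [hct] at this; nlinarith
    have hsn : 0 ≤ Real.sin t := Real.sin_nonneg_of_nonneg_of_le_pi ht0 (Real.arccos_le_pi c)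
    nlinarith [hs, hsn]
  have hcσ : 0 < Real.cos (θ / 2) :=
    Real.cos_pos_of_mem_Ioo ⟨by linarith [Real.pi_pos], by linarith⟩
  have hmono : Real.sin (t - θ / 2) ≤ Real.sin (m - θ / 2) := by
    apply Real.strictMonoOn_sin.monotoneOn ⟨by linarith, by linarith⟩
      ⟨by linarith, by linarith⟩ (by linarith)
  rw [Real.sin_sub, Real.sin_sub] at hmono
  have h2 := mul_le_mul_of_nonneg_right hmono (le_of_lt (inv_pos.2 hcσ))
  have e : ∀ x : ℝ, (Real.sin x * Real.cos (θ / 2) - Real.cos x * Real.sin (θ / 2)) *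
      (Real.cos (θ / 2))⁻¹ = Real.sin x - Real.tan (θ / 2) * Real.cos x := by
    intro x
    rw [Real.tan_eq_sin_div_cos]
    field_simp
  rw [e t, e m] at h2
  calc b - Real.tan (θ / 2) * c ≤ Real.sin t - Real.tan (θ / 2) * Real.cos t := by
        rw [hct]; linarith
    _ ≤ _ := h2

lemma half_core (γ' : ℝ → EuclideanSpace ℝ (Fin 2)) (u : EuclideanSpace ℝ (Fin 2))
    (hu : ‖u‖ = 1) (a θ : ℝ) (hθ0 : 0 < θ) (hθπ : θ < π)
    (m : ℝ → ℝ) (hm : ∀ s ∈ Icc a (a + θ), 0 ≤ m s ∧ m s ≤ θ)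
    (hγcont : ContinuousOn γ' (Icc a (a + θ)))
    (hmcont : ContinuousOn m (Icc a (a + θ)))
    (hunit' : ∀ s ∈ Icc a (a + θ), ‖γ' s‖ = 1)
    (hpt : ∀ s ∈ Icc a (a + θ), Real.cos (m s) ≤ ⟪γ' s, u⟫)
    (hIcos : (∫ s in a..(a + θ), Real.cos (m s)) = Real.sin θ)
    (hIsin : (∫ s in a..(a + θ), Real.sin (m s)) = 1 - Real.cos θ) :
    (∫ s in a..(a + θ), γ' s) ≠ 0 ∧
      InnerProductGeometry.angle (∫ s in a..(a + θ), γ' s) u ≤ θ / 2 := by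
  have hab : a ≤ a + θ := by linarith
  have huIcc : uIcc a (a + θ) = Icc a (a + θ) := uIcc_of_le hab
  set v := ∫ s in a..(a + θ), γ' s with hv
  have hInt : IntervalIntegrable γ' MeasureTheory.volume a (a + θ) := by
    apply ContinuousOn.intervalIntegrable; rwa [huIcc]
  have hiint : ∀ c : EuclideanSpace ℝ (Fin 2),
      IntervalIntegrable (fun s => ⟪γ' s, c⟫) MeasureTheory.volume a (a + θ) := by
    intro c
    apply ContinuousOn.intervalIntegrable
    rw [huIcc]
    have : (fun s => ⟪γ' s, c⟫) = fun s => ⟪c, γ' s⟫ := funext fun s => real_inner_comm _ _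
    rw [this]
    exact (innerSL ℝ c).continuous.comp_continuousOn hγcont
  have hcosint : IntervalIntegrable (fun s => Real.cos (m s)) MeasureTheory.volume a (a + θ) := by
    apply ContinuousOn.intervalIntegrable; rw [huIcc]
    exact Real.continuous_cos.comp_continuousOn hmcont
  have hsinint : IntervalIntegrable (fun s => Real.sin (m s)) MeasureTheory.volume a (a + θ) := by
    apply ContinuousOn.intervalIntegrable; rw [huIcc]
    exact Real.continuous_sin.comp_continuousOn hmcont
  have hswap : ∀ c : EuclideanSpace ℝ (Fin 2), ⟪v, c⟫ = ∫ s in a..(a + θ), ⟪γ' s, c⟫ := by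
    intro c
    rw [real_inner_comm]
    calc ⟪c, v⟫ = innerSL ℝ c v := rfl
      _ = ∫ s in a..(a + θ), innerSL ℝ c (γ' s) :=
          ((innerSL ℝ c).intervalIntegral_comp_comm hInt).symm
      _ = ∫ s in a..(a + θ), ⟪γ' s, c⟫ :=
          intervalIntegral.integral_congr fun s _ => by
            rw [innerSL_apply_apply, real_inner_comm]
  set k := Real.tan (θ / 2) with hkdef
  set A := ⟪v, u⟫ with hA
  set B := ⟪v, perpV u⟫ with hB
  have hcσ : 0 < Real.cos (θ / 2) :=
    Real.cos_pos_of_mem_Ioo ⟨by linarith [Real.pi_pos], by linarith⟩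
  have hsσ : 0 ≤ Real.sin (θ / 2) := Real.sin_nonneg_of_nonneg_of_le_pi (by linarith)
    (by linarith [Real.pi_pos])
  have hkc : k * Real.cos (θ / 2) = Real.sin (θ / 2) := by
    rw [hkdef, Real.tan_eq_sin_div_cos]; field_simp
  have hksin : k * Real.sin θ = 1 - Real.cos θ := by
    have h1 : Real.sin θ = 2 * Real.sin (θ / 2) * Real.cos (θ / 2) := by
      have := Real.sin_two_mul (θ / 2); rw [show 2 * (θ / 2) = θ by ring] at this; exact this
    have h2 : Real.cos θ = 1 - 2 * Real.sin (θ / 2) ^ 2 := by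
      have h4 := Real.cos_two_mul (θ / 2)
      rw [show 2 * (θ / 2) = θ by ring] at h4
      have h3 := Real.sin_sq_add_cos_sq (θ / 2)
      nlinarith
    rw [h1, h2, hkdef, Real.tan_eq_sin_div_cos]
    field_simp
    ring
  have hApt : ∀ s ∈ Icc a (a + θ), Real.cos (m s) ≤ ⟪γ' s, u⟫ := hpt
  have hAge : Real.sin θ ≤ A := by
    rw [hA, hswap u, ← hIcos]
    exact intervalIntegral.integral_mono_on hab hcosint (hiint u) hApt
  have hApos : 0 < A := lt_of_lt_of_le (Real.sin_pos_of_pos_of_lt_pi hθ0 hθπ) hAge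
  have hptsq : ∀ s ∈ Icc a (a + θ), ⟪γ' s, u⟫ ^ 2 + ⟪γ' s, perpV u⟫ ^ 2 = 1 := by
    intro s hs
    rw [pythag hu (γ' s), hunit' s hs]; norm_num
  have hrhs : (∫ s in a..(a + θ), (Real.sin (m s) - k * Real.cos (m s))) = 0 := by
    rw [intervalIntegral.integral_sub hsinint (hcosint.const_mul k),
      intervalIntegral.integral_const_mul, hIsin, hIcos, hksin]
    ring
  have hBle : B - k * A ≤ 0 := by
    have hmono := intervalIntegral.integral_mono_on hab
      ((hiint (perpV u)).sub ((hiint u).const_mul k))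
      (hsinint.sub (hcosint.const_mul k))
      (fun s hs => pt_bound hθ0 hθπ (hm s hs).1 (hm s hs).2 (hptsq s hs) (hpt s hs))
    rw [hrhs, intervalIntegral.integral_sub (hiint (perpV u)) ((hiint u).const_mul k),
      intervalIntegral.integral_const_mul] at hmono
    rw [hB, hA, hswap (perpV u), hswap u]
    exact hmono
  have hBge : -B - k * A ≤ 0 := by
    have hptneg : ∀ s ∈ Icc a (a + θ),
        (fun s => ⟪γ' s, -perpV u⟫ - k * ⟪γ' s, u⟫) s ≤
          (fun s => Real.sin (m s) - k * Real.cos (m s)) s := by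
      intro s hs
      simp only [inner_neg_right]
      exact pt_bound hθ0 hθπ (hm s hs).1 (hm s hs).2 (by rw [← hptsq s hs]; ring) (hpt s hs)
    have hmono := intervalIntegral.integral_mono_on hab
      ((hiint (-perpV u)).sub ((hiint u).const_mul k))
      (hsinint.sub (hcosint.const_mul k)) hptneg
    rw [hrhs, intervalIntegral.integral_sub (hiint (-perpV u)) ((hiint u).const_mul k),
      intervalIntegral.integral_const_mul] at hmono
    have hBneg : (⟪v, -perpV u⟫ : ℝ) = -B := by rw [inner_neg_right, hB]
    rw [hB, hA, ← hBneg, hswap (-perpV u), hswap u]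
    exact hmono
  have hv2 : A ^ 2 + B ^ 2 = ‖v‖ ^ 2 := pythag hu v
  have hBsq : B ^ 2 ≤ k ^ 2 * A ^ 2 := by nlinarith [hBle, hBge, hApos]
  have hkc2 : k ^ 2 * Real.cos (θ / 2) ^ 2 = Real.sin (θ / 2) ^ 2 := by
    nlinarith [hkc]
  have hsq : (‖v‖ * Real.cos (θ / 2)) ^ 2 ≤ A ^ 2 := by
    have h1 : (‖v‖ * Real.cos (θ / 2)) ^ 2 =
        A ^ 2 * Real.cos (θ / 2) ^ 2 + B ^ 2 * Real.cos (θ / 2) ^ 2 := by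
      linear_combination Real.cos (θ / 2) ^ 2 * hv2.symm
    have h2 : B ^ 2 * Real.cos (θ / 2) ^ 2 ≤ Real.sin (θ / 2) ^ 2 * A ^ 2 := by
      calc B ^ 2 * Real.cos (θ / 2) ^ 2 ≤ k ^ 2 * A ^ 2 * Real.cos (θ / 2) ^ 2 :=
            mul_le_mul_of_nonneg_right hBsq (sq_nonneg _)
        _ = Real.sin (θ / 2) ^ 2 * A ^ 2 := by rw [← hkc2]; ring
    have h3 := Real.sin_sq_add_cos_sq (θ / 2)
    have h4 : A ^ 2 * Real.cos (θ / 2) ^ 2 + Real.sin (θ / 2) ^ 2 * A ^ 2 = A ^ 2 := by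
      linear_combination A ^ 2 * h3
    linarith
  have hvA : ‖v‖ * Real.cos (θ / 2) ≤ A := by
    nlinarith [hsq, hApos, mul_nonneg (norm_nonneg v) hcσ.le]
  have hvpos : 0 < ‖v‖ := by
    have h1 : A ≤ ‖v‖ * ‖u‖ := real_inner_le_norm v u
    rw [hu, mul_one] at h1
    linarith
  have hvne : v ≠ 0 := by
    intro h; rw [h, norm_zero] at hvpos; exact lt_irrefl 0 hvpos
  refine ⟨hvne, ?_⟩
  have hcos : Real.cos (θ / 2) ≤ Real.cos (InnerProductGeometry.angle v u) := by
    rw [InnerProductGeometry.cos_angle, hu, mul_one]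
    rw [le_div_iff₀ hvpos]
    linarith
  have han : 0 ≤ InnerProductGeometry.angle v u := InnerProductGeometry.angle_nonneg v u
  have hap : InnerProductGeometry.angle v u ≤ π := InnerProductGeometry.angle_le_pi v u
  exact (Real.strictAntiOn_cos.le_iff_ge ⟨by linarith, by linarith [Real.pi_pos]⟩
    ⟨han, hap⟩).1 hcos


lemma angle_abs_add (a b : Real.Angle) :
    |(a + b).toReal| ≤ |a.toReal| + |b.toReal| := by
  rcases le_or_gt |a.toReal + b.toReal| π with h | h
  · have hab : (a + b) = ((a.toReal + b.toReal : ℝ) : Real.Angle) := by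
      rw [Real.Angle.coe_add, a.coe_toReal, b.coe_toReal]
    rcases lt_or_eq_of_le (neg_le_of_abs_le h) with h1 | h1
    · rw [hab, Real.Angle.toReal_coe_eq_self_iff.2 ⟨h1, le_of_abs_le h⟩]
      exact abs_add_le _ _
    · have h2 : |a.toReal + b.toReal| = π := by
        rw [← h1, abs_neg, abs_of_nonneg Real.pi_pos.le]
      rw [hab, ← h1, Real.Angle.coe_neg, Real.Angle.neg_coe_pi, Real.Angle.toReal_pi,
        abs_of_nonneg Real.pi_pos.le]
      calc π = |a.toReal + b.toReal| := h2.symm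
        _ ≤ _ := abs_add_le _ _
  · exact (Real.Angle.abs_toReal_le_pi _).trans (h.le.trans (abs_add_le _ _))

lemma angle_triangle2 {x y z : EuclideanSpace ℝ (Fin 2)} (hx : x ≠ 0) (hy : y ≠ 0) (hz : z ≠ 0) :
    InnerProductGeometry.angle x z ≤
      InnerProductGeometry.angle x y + InnerProductGeometry.angle y z := by
  haveI : Fact (Module.finrank ℝ (EuclideanSpace ℝ (Fin 2)) = 2) := ⟨finrank_euclideanSpace_fin⟩
  set o : Orientation ℝ (EuclideanSpace ℝ (Fin 2)) (Fin 2) :=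
    (EuclideanSpace.basisFun (Fin 2) ℝ).toBasis.orientation
  rw [o.angle_eq_abs_oangle_toReal hx hz, o.angle_eq_abs_oangle_toReal hx hy,
    o.angle_eq_abs_oangle_toReal hy hz, ← o.oangle_add hx hy hz]
  exact angle_abs_add _ _

/-- The turn of the `θ`-discretization at a vertex whose two incident parameter gaps both
equal `θ` — the angle between the chords `γ(t₀)γ(t₀+θ)` and `γ(t₀+θ)γ(t₀+2θ)` — is at
most `θ`. -/
theorem discretization_turn_bound
    (L θ t₀ : ℝ) (γ γ' : ℝ → EuclideanSpace ℝ (Fin 2))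
    (hderiv : ∀ t ∈ Set.Icc (0:ℝ) L, HasDerivAt γ (γ' t) t)
    (hunit : ∀ t ∈ Set.Icc (0:ℝ) L, ‖γ' t‖ = 1)
    (hlip : ∀ t s : ℝ, t ∈ Set.Icc (0:ℝ) L → s ∈ Set.Icc (0:ℝ) L → t ≤ s → s - t ≤ π →
      Real.cos (s - t) ≤ (inner ℝ (γ' s) (γ' t) : ℝ))
    (hθ0 : 0 < θ) (hθπ : θ < π)
    (ht₀ : 0 ≤ t₀) (htL : t₀ + 2 * θ ≤ L) :
    InnerProductGeometry.angle (γ (t₀ + θ) - γ t₀) (γ (t₀ + 2 * θ) - γ (t₀ + θ)) ≤ θ := by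
  -- γ' is 1-Lipschitz on [0, L], hence continuous there
  have hln : ∀ t ∈ Icc (0:ℝ) L, ∀ s ∈ Icc (0:ℝ) L, t ≤ s →
      dist (γ' t) (γ' s) ≤ s - t := by
    intro t ht s hs hts
    rcases le_or_gt (s - t) π with hπ | hπ
    · have h := hlip t s ht hs hts hπ
      have hcb := Real.one_sub_sq_div_two_le_cos (x := s - t)
      have hsq : dist (γ' t) (γ' s) ^ 2 ≤ (s - t) ^ 2 := by
        rw [dist_eq_norm, norm_sub_sq_real, hunit t ht, hunit s hs,
          real_inner_comm (γ' s) (γ' t)]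
        nlinarith [h, hcb]
      nlinarith [dist_nonneg (x := γ' t) (y := γ' s), hsq]
    · calc dist (γ' t) (γ' s) ≤ ‖γ' t‖ + ‖γ' s‖ := by
            rw [dist_eq_norm]; exact norm_sub_le _ _
        _ = 2 := by rw [hunit t ht, hunit s hs]; norm_num
        _ ≤ π := Real.two_le_pi
        _ ≤ s - t := hπ.le
  have hγ'cont : ContinuousOn γ' (Icc (0:ℝ) L) := by
    apply LipschitzOnWith.continuousOn
    apply LipschitzOnWith.of_dist_le' (K := 1)
    intro x hx y hy
    rcases le_total x y with h | h
    · rw [one_mul, Real.dist_eq, abs_of_nonpos (by linarith)]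
      calc dist (γ' x) (γ' y) ≤ y - x := hln x hx y hy h
        _ = -(x - y) := by ring
    · rw [one_mul, Real.dist_eq, abs_of_nonneg (by linarith), dist_comm]
      exact hln y hy x hx h
  -- the fundamental theorem of calculus for chords
  have hftc : ∀ a b : ℝ, 0 ≤ a → a ≤ b → b ≤ L → γ b - γ a = ∫ s in a..b, γ' s := by
    intro a b ha hab hbL
    have hsub : Icc a b ⊆ Icc (0:ℝ) L := Icc_subset_Icc ha hbL
    have h1 : ∀ x ∈ uIcc a b, HasDerivAt γ (γ' x) x := fun x hx =>
      hderiv x (hsub ((uIcc_of_le hab) ▸ hx))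
    have h2 : IntervalIntegrable γ' MeasureTheory.volume a b := by
      apply ContinuousOn.intervalIntegrable
      rw [uIcc_of_le hab]
      exact hγ'cont.mono hsub
    exact (intervalIntegral.integral_eq_sub_of_hasDerivAt h1 h2).symm
  set u := γ' (t₀ + θ) with hudef
  have huI : (t₀ + θ) ∈ Icc (0:ℝ) L := ⟨by linarith, by linarith⟩
  have hu : ‖u‖ = 1 := hunit _ huI
  have hune : u ≠ 0 := by
    intro h; rw [h, norm_zero] at hu; norm_num at hu
  -- first chord
  have h1 := half_core γ' u hu t₀ θ hθ0 hθπ (fun s => t₀ + θ - s)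
    (fun s hs => ⟨show (0:ℝ) ≤ t₀ + θ - s by linarith [hs.2],
      show t₀ + θ - s ≤ θ by linarith [hs.1]⟩)
    (hγ'cont.mono (Icc_subset_Icc ht₀ (by linarith)))
    ((continuous_const.sub continuous_id).continuousOn)
    (fun s hs => hunit s ⟨by linarith [hs.1], by linarith [hs.2]⟩)
    (fun s hs => by
      have := hlip s (t₀ + θ) ⟨by linarith [hs.1], by linarith [hs.2]⟩ huI
        (by linarith [hs.2]) (by linarith [hs.1])
      rw [real_inner_comm]
      convert this using 2 <;> ring)
    (by
      rw [intervalIntegral.integral_comp_sub_left (fun x => Real.cos x) (t₀ + θ),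
        show t₀ + θ - (t₀ + θ) = 0 by ring, show t₀ + θ - t₀ = θ by ring,
        integral_cos, Real.sin_zero, sub_zero])
    (by
      rw [intervalIntegral.integral_comp_sub_left (fun x => Real.sin x) (t₀ + θ),
        show t₀ + θ - (t₀ + θ) = 0 by ring, show t₀ + θ - t₀ = θ by ring,
        integral_sin, Real.cos_zero])
  -- second chord
  have h2 := half_core γ' u hu (t₀ + θ) θ hθ0 hθπ (fun s => s - (t₀ + θ))
    (fun s hs => ⟨show (0:ℝ) ≤ s - (t₀ + θ) by linarith [hs.1],
      show s - (t₀ + θ) ≤ θ by linarith [hs.2]⟩)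
    (hγ'cont.mono (Icc_subset_Icc (by linarith) (by linarith)))
    ((continuous_id.sub continuous_const).continuousOn)
    (fun s hs => hunit s ⟨by linarith [hs.1], by linarith [hs.2]⟩)
    (fun s hs => hlip (t₀ + θ) s huI ⟨by linarith [hs.1], by linarith [hs.2]⟩
      (by linarith [hs.1]) (by linarith [hs.2]))
    (by
      rw [intervalIntegral.integral_comp_sub_right (fun x => Real.cos x) (t₀ + θ),
        show t₀ + θ - (t₀ + θ) = 0 by ring, show t₀ + θ + θ - (t₀ + θ) = θ by ring,
        integral_cos, Real.sin_zero, sub_zero])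
    (by
      rw [intervalIntegral.integral_comp_sub_right (fun x => Real.sin x) (t₀ + θ),
        show t₀ + θ - (t₀ + θ) = 0 by ring, show t₀ + θ + θ - (t₀ + θ) = θ by ring,
        integral_sin, Real.cos_zero])
  obtain ⟨hne1, hang1⟩ := h1
  obtain ⟨hne2, hang2⟩ := h2
  have hc1 : γ (t₀ + θ) - γ t₀ = ∫ s in t₀..(t₀ + θ), γ' s :=
    hftc t₀ (t₀ + θ) ht₀ (by linarith) (by linarith)
  have hc2 : γ (t₀ + 2 * θ) - γ (t₀ + θ) = ∫ s in (t₀ + θ)..((t₀ + θ) + θ), γ' s := by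
    rw [show t₀ + 2 * θ = (t₀ + θ) + θ by ring]
    exact hftc (t₀ + θ) ((t₀ + θ) + θ) (by linarith) (by linarith) (by linarith)
  rw [hc1, hc2]
  calc InnerProductGeometry.angle (∫ s in t₀..(t₀ + θ), γ' s)
        (∫ s in (t₀ + θ)..((t₀ + θ) + θ), γ' s)
      ≤ InnerProductGeometry.angle (∫ s in t₀..(t₀ + θ), γ' s) u +
        InnerProductGeometry.angle u (∫ s in (t₀ + θ)..((t₀ + θ) + θ), γ' s) :=
        angle_triangle2 hne1 hune hne2
    _ ≤ θ / 2 + θ / 2 := by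
        refine add_le_add hang1 ?_
        rw [InnerProductGeometry.angle_comm]
        exact hang2
    _ = θ := by ring
end
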